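/- For each a,b ∈ ℕ∪{0} and c ≥ 2 there is a ℤ₂-equivariant homeomorphism 𝕋^{a,b,c} ≃ 𝕋^{a+c−1,b,1}. Explicitly, identifying 𝕋^d with U(1)^d, the map f_c(z₁,…,z_{d−c+1},…,z_{d−1},z_d) := (z₁,…,z_{d−c+1}z_d,…,z_{d−1}z_d, z_d) (multiplying each of the last c−1 antipodal coordinates except the final one by z_d) is a homeomorphism intertwining the product involutions, where S^{2,0} corresponds to U(1) with involution z ↦ z and S^{0,2} corresponds to U(1) with involution z ↦ −z. -/

import Mathlib

/-!
STATEMENT 18: For a,b ∈ ℕ and c ≥ 2 there is a ℤ₂-equivariant homeomorphism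
𝕋^{a,b,c} ≃ 𝕋^{a+c−1,b,1}.  Identifying 𝕋^d with U(1)^d, an explicit such map is
f_c(z₁,…,z_{d−c+1},…,z_{d−1},z_d) = (z₁,…,z_{d−c+1}z_d,…,z_{d−1}z_d,z_d),
multiplying each of the last c−1 antipodal coordinates except the final one by the
final coordinate; since (−z_i)(−z_d) = z_i z_d, these products become coordinates of
trivial-involution type.  Here S^{2,0} is U(1) with trivial involution, S^{1,1} is
U(1) with conjugation, S^{0,2} is U(1) with the antipodal involution, and
𝕋^{a,b,c} = (S^{2,0})^a × (S^{1,1})^b × (S^{0,2})^c carries the product involution.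
The homeomorphism below fixes the S^{1,1} block and the final antipodal coordinate,
as f_c does.
-/

/-- The circle S¹ = U(1) ⊂ ℂ. -/
noncomputable abbrev C1 : Type := Metric.sphere (0 : ℂ) 1

/-- Complex conjugation on the circle (the involution of S^{1,1}). -/
noncomputable def conjC1 : C1 → C1 := fun z =>
  ⟨(starRingEnd ℂ) (z : ℂ), by
    have hz := z.2
    simp only [Metric.mem_sphere, dist_zero_right] at hz ⊢
    simpa using hz⟩

/-- The involutive torus 𝕋^{a,b,c} = (S^{2,0})^a × (S^{1,1})^b × (S^{0,2})^c. -/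
noncomputable abbrev Torus (a b c : ℕ) : Type :=
  (Fin a → C1) × (Fin b → C1) × (Fin c → C1)

/-- The product involution: trivial, conjugation, antipodal on the three blocks. -/
noncomputable def torusInv (a b c : ℕ) : Torus a b c → Torus a b c := fun p =>
  (p.1, fun i => conjC1 (p.2.1 i), fun i => -(p.2.2 i))

/-!
On the antipodal block `f_c` is the shear `(x, w) ↦ (x · w, w)` with `x ∈ U(1)^{c-1}`,
`w ∈ U(1)`, a homeomorphism with inverse `(y, w) ↦ (y · w⁻¹, w)`. Since `(-x_i)(-w) = x_i w`,
the sheared coordinates are fixed by the antipodal involution, so they join the trivial block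
`(S^{2,0})^a`, while `w` stays antipodal.
-/

section MulLast

variable (G : Type*) [TopologicalSpace G] [Group G] [IsTopologicalGroup G]

def Homeomorph.piFinMulLast (n : ℕ) : (Fin (n + 1) → G) ≃ₜ (Fin n → G) × G where
  toFun x := (fun i => x i.castSucc * x (Fin.last n), x (Fin.last n))
  invFun p := Fin.snoc (fun i => p.1 i * p.2⁻¹) p.2
  left_inv x := by
    funext i
    refine Fin.lastCases ?_ (fun i => ?_) i <;> simp
  right_inv p := by simp
  continuous_toFun := by fun_prop
  continuous_invFun := (continuous_pi fun i => by fun_prop).finSnoc continuous_snd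

variable {G}

theorem Homeomorph.piFinMulLast_neg [HasDistribNeg G] {n : ℕ} (x : Fin (n + 1) → G) :
    piFinMulLast G n (-x) = ((piFinMulLast G n x).1, -(piFinMulLast G n x).2) := by
  simp [piFinMulLast]

end MulLast

noncomputable def torusFold (a b n : ℕ) : Torus a b (n + 1) ≃ₜ Torus (a + n) b 1 :=
  (Homeomorph.prodCongr (.refl _) (.prodCongr (.refl _) (.piFinMulLast C1 n))).trans <|
    (Homeomorph.prodAssoc _ _ _).symm.trans <| (Homeomorph.prodProdProdComm _ _ _ _).trans <|
      .prodCongr (Fin.appendHomeomorph a n)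
        (.prodCongr (.refl _) (Homeomorph.funUnique (Fin 1) C1).symm)

theorem torusFold_apply (a b n : ℕ) (p : Torus a b (n + 1)) :
    torusFold a b n p =
      (Fin.append p.1 (Homeomorph.piFinMulLast C1 n p.2.2).1, p.2.1, fun _ => p.2.2 (Fin.last n)) :=
  rfl

theorem torusFold_torusInv (a b n : ℕ) (p : Torus a b (n + 1)) :
    torusFold a b n (torusInv a b (n + 1) p) = torusInv (a + n) b 1 (torusFold a b n p) := by
  simp [torusFold_apply, torusInv, ← Pi.neg_def, Homeomorph.piFinMulLast_neg]

theorem fkmm_stmt18 (a b c : ℕ) (hc : 2 ≤ c) :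
    ∃ e : Torus a b c ≃ₜ Torus (a + c - 1) b 1,
      -- e intertwines the two involutions (ℤ₂-equivariance) …
      (∀ p, e (torusInv a b c p) = torusInv (a + c - 1) b 1 (e p)) ∧
      -- … and, like the explicit map f_c, it fixes the S^{1,1} block and keeps the
      -- final antipodal coordinate
      (∀ p : Torus a b c, (e p).2.1 = p.2.1) ∧
      (∀ p : Torus a b c, (e p).2.2 = fun _ => p.2.2 ⟨c - 1, by omega⟩) := by
  obtain ⟨n, rfl⟩ : ∃ n, c = n + 1 := ⟨c - 1, by omega⟩
  -- `a + (n + 1) - 1` reduces to `a + n`, and `⟨n + 1 - 1, _⟩` to `Fin.last n`.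
  exact ⟨torusFold a b n, torusFold_torusInv a b n, fun _ => rfl, fun _ => rfl⟩
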